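/- arXiv:1801.10063 — 9 statements merged into one kernel-verified Lean document; each statement's English description precedes it below -/
import Mathlib

section
/- Let M be an mge monoid. A tuple (a_1,...,a_n) ∈ M^n is equalisable (there exist u_1,...,u_n with a_i*u_i = a_j*u_j for all i,j) if and only if the iterated join (...((a_1 ∨ a_2) ∨ a_3)...) ∨ a_n is defined, and in that case the tuple of quotients ((⋁a_i)/a_1, ..., (⋁a_i)/a_n) is a most general equaliser of (a_1,...,a_n). -/
def dvdL {M : Type*} [Monoid M] (a b : M) : Prop := ∃ c, a * c = b

/-- `s` is a supremum of the (finite) family `a` w.r.t. left divisibility. -/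
def IsSupFam {M : Type*} [Monoid M] {n : ℕ} (a : Fin n → M) (s : M) : Prop :=
  (∀ i, dvdL (a i) s) ∧ ∀ m, (∀ i, dvdL (a i) m) → dvdL s m

lemma dvdL_refl {M : Type*} [Monoid M] (a : M) : dvdL a a := ⟨1, mul_one a⟩

lemma dvdL_trans {M : Type*} [Monoid M] {a b c : M} (h1 : dvdL a b) (h2 : dvdL b c) :
    dvdL a c := by
  obtain ⟨x, hx⟩ := h1; obtain ⟨y, hy⟩ := h2
  exact ⟨x * y, by rw [← mul_assoc, hx, hy]⟩

lemma sup_fam_exists {M : Type*} [Monoid M]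
    (hRMGE : ∀ a b : M, (∃ m, dvdL a m ∧ dvdL b m) →
      ∃ s, (dvdL a s ∧ dvdL b s) ∧ ∀ m, dvdL a m → dvdL b m → dvdL s m) :
    ∀ n (a : Fin (n + 1) → M) (w : M), (∀ i, dvdL (a i) w) → ∃ s, IsSupFam a s := by
  intro n
  induction n with
  | zero =>
    intro a w _
    refine ⟨a 0, fun i => ?_, fun m hm => hm 0⟩
    have : i = 0 := Fin.fin_one_eq_zero i
    rw [this]; exact dvdL_refl _
  | succ k ih =>
    intro a w hw
    obtain ⟨s', hs'⟩ := ih (fun j => a j.castSucc) w (fun j => hw j.castSucc)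
    obtain ⟨s, ⟨hs1, hs2⟩, hs3⟩ := hRMGE s' (a (Fin.last (k + 1)))
      ⟨w, hs'.2 w (fun j => hw j.castSucc), hw _⟩
    refine ⟨s, fun i => ?_, fun m hm => ?_⟩
    · rcases Fin.lastCases (motive := fun i => dvdL (a i) s)
        hs2 (fun j => dvdL_trans (hs'.1 j) hs1) i with h
      exact h
    · exact hs3 m (hs'.2 m (fun j => hm j.castSucc)) (hm _)

theorem mge_iff_join_defined {M : Type*} [Monoid M]
    (hLC : ∀ a b c : M, c * a = c * b → a = b)
    (hRC : ∀ a b c : M, a * c = b * c → a = b)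
    (hRMGE : ∀ a b : M, (∃ m, dvdL a m ∧ dvdL b m) →
      ∃ s, (dvdL a s ∧ dvdL b s) ∧ ∀ m, dvdL a m → dvdL b m → dvdL s m)
    (n : ℕ) (hn : 1 ≤ n) (a : Fin n → M) :
    ((∃ u : Fin n → M, ∀ i j, a i * u i = a j * u j) ↔ ∃ s, IsSupFam a s) ∧
    (∀ s, IsSupFam a s → ∀ m : Fin n → M, (∀ i, a i * m i = s) →
      ((∀ i j, a i * m i = a j * m j) ∧
        ∀ u : Fin n → M, (∀ i j, a i * u i = a j * u j) →
          ∃ d, ∀ i, u i = m i * d)) := by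
  obtain ⟨k, rfl⟩ : ∃ k, n = k + 1 := ⟨n - 1, (Nat.succ_pred_eq_of_pos hn).symm⟩
  constructor
  · constructor
    · rintro ⟨u, hu⟩
      exact sup_fam_exists hRMGE k a (a 0 * u 0) (fun i => ⟨u i, hu i 0⟩)
    · rintro ⟨s, hs1, _⟩
      refine ⟨fun i => (hs1 i).choose, fun i j => ?_⟩
      rw [(hs1 i).choose_spec, (hs1 j).choose_spec]
  · intro s hs m hm
    refine ⟨fun i j => by rw [hm i, hm j], fun u hu => ?_⟩
    obtain ⟨d, hd⟩ := hs.2 (a 0 * u 0) (fun i => ⟨u i, hu i 0⟩)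
    refine ⟨d, fun i => hLC _ _ (a i) ?_⟩
    rw [← mul_assoc, hm i, hd, hu i 0]
end

section
/- Let M be an mge monoid and a,b,c,d ∈ M. Then the pairs (a,b) and (c,d) either have no common equaliser, or they have exactly the same set of equalisers. -/
theorem mge_aux {M : Type*} [Monoid M]
    (hLC : ∀ a b c : M, c * a = c * b → a = b)
    (hRC : ∀ a b c : M, a * c = b * c → a = b)
    (hRMGE : ∀ a b : M, (∃ m, dvdL a m ∧ dvdL b m) →
      ∃ s, (dvdL a s ∧ dvdL b s) ∧ ∀ m, dvdL a m → dvdL b m → dvdL s m)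
    (a b c d u v : M) (hab : a * u = b * v) (hcd : c * u = d * v)
    {p q : M} (hpq : a * p = b * q) : c * p = d * q := by
  obtain ⟨s, ⟨⟨u₀, hu₀⟩, ⟨v₀, hv₀⟩⟩, hmin⟩ :=
    hRMGE a b ⟨a * u, ⟨u, rfl⟩, ⟨v, hab.symm⟩⟩
  obtain ⟨t₁, ht₁⟩ := hmin (a * u) ⟨u, rfl⟩ ⟨v, hab.symm⟩
  obtain ⟨t, ht⟩ := hmin (a * p) ⟨p, rfl⟩ ⟨q, hpq.symm⟩
  have hu : u = u₀ * t₁ := hLC _ _ a (by rw [← mul_assoc, hu₀, ht₁])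
  have hv : v = v₀ * t₁ := hLC _ _ b (by rw [← mul_assoc, hv₀, ht₁, hab])
  have hp : p = u₀ * t := hLC _ _ a (by rw [← mul_assoc, hu₀, ht])
  have hq : q = v₀ * t := hLC _ _ b (by rw [← mul_assoc, hv₀, ht, hpq])
  have key : c * u₀ = d * v₀ :=
    hRC _ _ t₁ (by rw [mul_assoc, mul_assoc, ← hu, ← hv, hcd])
  rw [hp, hq, ← mul_assoc, ← mul_assoc, key]

theorem mge_equalisers_partition {M : Type*} [Monoid M]
    (hLC : ∀ a b c : M, c * a = c * b → a = b)
    (hRC : ∀ a b c : M, a * c = b * c → a = b)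
    (hRMGE : ∀ a b : M, (∃ m, dvdL a m ∧ dvdL b m) →
      ∃ s, (dvdL a s ∧ dvdL b s) ∧ ∀ m, dvdL a m → dvdL b m → dvdL s m)
    (a b c d : M) :
    (¬ ∃ u v : M, a * u = b * v ∧ c * u = d * v) ∨
      {p : M × M | a * p.1 = b * p.2} = {p : M × M | c * p.1 = d * p.2} := by
  by_cases h : ∃ u v : M, a * u = b * v ∧ c * u = d * v
  · right
    obtain ⟨u, v, hab, hcd⟩ := h
    ext ⟨p, q⟩
    simp only [Set.mem_setOf_eq]
    exact ⟨fun hpq => mge_aux hLC hRC hRMGE a b c d u v hab hcd hpq,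
           fun hpq => mge_aux hLC hRC hRMGE c d a b u v hcd hab hpq⟩
  · left; exact h
end

section
/- Let M be an mge monoid, S a nonempty subset of M, and v ∈ M. Then the set of infimums of v*S (w.r.t. left-divisibility) equals v times the set of infimums of S, i.e., inf(vS) = v·inf(S). -/
/-- The set of infimums of `S` w.r.t. left divisibility. -/
def infSet {M : Type*} [Monoid M] (S : Set M) : Set M :=
  {l | (∀ s ∈ S, dvdL l s) ∧ ∀ m, (∀ s ∈ S, dvdL m s) → dvdL m l}

theorem inf_mul_left {M : Type*} [Monoid M]
    (hLC : ∀ a b c : M, c * a = c * b → a = b)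
    (hRC : ∀ a b c : M, a * c = b * c → a = b)
    (hRMGE : ∀ a b : M, (∃ m, dvdL a m ∧ dvdL b m) →
      ∃ s, (dvdL a s ∧ dvdL b s) ∧ ∀ m, dvdL a m → dvdL b m → dvdL s m)
    (S : Set M) (hS : S.Nonempty) (v : M) :
    infSet ((v * ·) '' S) = (v * ·) '' infSet S := by
  have cancel : ∀ a b : M, dvdL (v * a) (v * b) → dvdL a b := by
    rintro a b ⟨c, hc⟩
    exact ⟨c, hLC _ _ v (by rw [← mul_assoc]; exact hc)⟩
  have cancel' : ∀ a b : M, dvdL a b → dvdL (v * a) (v * b) := by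
    rintro a b ⟨c, hc⟩
    exact ⟨c, by rw [mul_assoc, hc]⟩
  have trans : ∀ a b c : M, dvdL a b → dvdL b c → dvdL a c := by
    rintro a b c ⟨x, hx⟩ ⟨y, hy⟩
    exact ⟨x * y, by rw [← mul_assoc, hx, hy]⟩
  ext l
  constructor
  · rintro ⟨hlb, hmax⟩
    have hvlb : ∀ x ∈ (v * ·) '' S, dvdL v x := by
      rintro x ⟨s, hs, rfl⟩; exact ⟨s, rfl⟩
    obtain ⟨m, hm⟩ := hmax v hvlb
    refine ⟨m, ⟨fun s hs => cancel m s (hm ▸ hlb _ ⟨s, hs, rfl⟩), ?_⟩, hm⟩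
    intro n hn
    have : dvdL (v * n) l := hmax (v * n) (by rintro x ⟨s, hs, rfl⟩; exact cancel' n s (hn s hs))
    exact cancel n m (hm ▸ this)
  · rintro ⟨m, ⟨hmlb, hmmax⟩, rfl⟩
    refine ⟨by rintro x ⟨s, hs, rfl⟩; exact cancel' m s (hmlb s hs), ?_⟩
    intro n hn
    obtain ⟨s, hs⟩ := hS
    obtain ⟨g, ⟨hng, hvg⟩, hgmin⟩ := hRMGE n v ⟨v * s, hn _ ⟨s, hs, rfl⟩, ⟨s, rfl⟩⟩
    obtain ⟨k, rfl⟩ := hvg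
    have hk : ∀ s' ∈ S, dvdL k s' := fun s' hs' =>
      cancel k s' (hgmin (v * s') (hn _ ⟨s', hs', rfl⟩) ⟨s', rfl⟩)
    exact trans n (v * k) (v * m) hng (cancel' k m (hmmax k hk))
end

section
/- Every sequentiable structure satisfies the GCLF-axiom: for all m,v,x, if m ≤_M v and m ≤_M x*v then m ≤_M x*m. -/
theorem sequentiable_GCLF_general {M : Type*} [Monoid M] (norm : M → NNReal)
    (hHom : ∀ a b : M, norm (a * b) = norm a + norm b)
    (hSeq : ∀ a b c : M, dvdL a (b * c) → norm a ≤ norm b → dvdL a b) :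
    ∀ m v x : M, dvdL m v → dvdL m (x * v) → dvdL m (x * m) := by
  rintro m _ x ⟨d, rfl⟩ hm
  refine hSeq m (x * m) d ?_ ?_
  · rwa [mul_assoc]
  · rw [hHom]
    exact le_add_self

theorem sequentiable_GCLF {M : Type*} [Monoid M] (norm : M → NNReal)
    (hInf : ∀ a b : M, ∃! l : M, (dvdL l a ∧ dvdL l b) ∧
      ∀ m, dvdL m a → dvdL m b → dvdL m l)
    (hHom : ∀ a b : M, norm (a * b) = norm a + norm b)
    (hKer : ∀ a : M, norm a = 0 ↔ a = 1)
    (hSeq : ∀ a b c : M, dvdL a (b * c) → norm a ≤ norm b → dvdL a b) :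
    ∀ m v x : M, dvdL m v → dvdL m (x * v) → dvdL m (x * m) :=
  sequentiable_GCLF_general norm hHom hSeq
end

section
/- Every sequentiable structure satisfies the LP-axiom: for all u,v, if there is a sequence (a_n) with u*a_{n+1} = v*a_n for all n, then u ≤_M v. -/
theorem sequentiable_LP {M : Type*} [Monoid M] (norm : M → NNReal)
    (hInf : ∀ a b : M, ∃! l : M, (dvdL l a ∧ dvdL l b) ∧
      ∀ m, dvdL m a → dvdL m b → dvdL m l)
    (hHom : ∀ a b : M, norm (a * b) = norm a + norm b)
    (hKer : ∀ a : M, norm a = 0 ↔ a = 1)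
    (hSeq : ∀ a b c : M, dvdL a (b * c) → norm a ≤ norm b → dvdL a b) :
    ∀ u v : M, (∃ a : ℕ → M, ∀ n, u * a (n + 1) = v * a n) → dvdL u v := by
  rintro u v ⟨a, ha⟩
  have h1 : ∀ n, (norm u : ℝ) + norm (a (n + 1)) = norm v + norm (a n) := by
    intro n
    have h := hHom u (a (n + 1))
    rw [ha n, hHom v (a n)] at h
    exact_mod_cast h.symm
  have key : ∀ n : ℕ, (n : ℝ) * norm u + norm (a n) = n * norm v + norm (a 0) := by
    intro n
    induction n with
    | zero => simp
    | succ k ih =>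
      have := h1 k
      push_cast
      nlinarith [h1 k]
  have hle : norm u ≤ norm v := by
    by_contra h
    push_neg at h
    have hd : (0 : ℝ) < (norm u : ℝ) - norm v := by
      have : (norm v : ℝ) < norm u := by exact_mod_cast h
      linarith
    obtain ⟨n, hn⟩ := Archimedean.arch (norm (a 0) : ℝ) hd
    have hk := key (n + 1)
    have hnn : (0 : ℝ) ≤ norm (a (n + 1)) := (norm (a (n+1))).coe_nonneg
    have hnn0 : (0 : ℝ) ≤ norm (a 0) := (norm (a 0)).coe_nonneg
    simp only [nsmul_eq_mul] at hn
    push_cast at hk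
    nlinarith
  exact hSeq u v (a 0) ⟨a 1, ha 0⟩ hle
end

section
/- If monoids M₁ and M₂ both satisfy the WLP-axiom, then their direct product M₁ × M₂ satisfies the WLP-axiom. -/
/-- WLP-axiom for a monoid. -/
def WLPaxiom (M : Type*) [Monoid M] : Prop :=
  ∀ u v : M, ∃ x : M, ∀ a : ℕ → M,
    (∀ n, u * a (n + 1) = v * a n) →
      dvdL (u * x) (v * x) ∧ ∀ n, dvdL x (a n)

theorem WLP_prod {M₁ M₂ : Type*} [Monoid M₁] [Monoid M₂]
    (h₁ : WLPaxiom M₁) (h₂ : WLPaxiom M₂) : WLPaxiom (M₁ × M₂) := by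
  intro u v
  obtain ⟨x₁, hx₁⟩ := h₁ u.1 v.1
  obtain ⟨x₂, hx₂⟩ := h₂ u.2 v.2
  refine ⟨(x₁, x₂), fun a ha => ?_⟩
  obtain ⟨⟨c₁, hc₁⟩, hd₁⟩ := hx₁ (fun n => (a n).1) (fun n => congrArg Prod.fst (ha n))
  obtain ⟨⟨c₂, hc₂⟩, hd₂⟩ := hx₂ (fun n => (a n).2) (fun n => congrArg Prod.snd (ha n))
  refine ⟨⟨(c₁, c₂), Prod.ext hc₁ hc₂⟩, fun n => ?_⟩
  obtain ⟨d₁, hd₁⟩ := hd₁ n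
  obtain ⟨d₂, hd₂⟩ := hd₂ n
  exact ⟨(d₁, d₂), Prod.ext hd₁ hd₂⟩
end

section
/- Let M be an mge monoid and f : Σ* → M a partial function. Then the relation ≡_f, defined by α ≡_f β iff α⁻¹dom(f) = β⁻¹dom(f) and there exist u,v ∈ M and s : Σ* → M with f(αz) = u*s(z) and f(βz) = v*s(z) for all z ∈ α⁻¹dom(f), is a right-invariant equivalence relation (i.e., α ≡_f β implies αa ≡_f βa for every a ∈ Σ). -/
/-- The Myhill–Nerode style relation `≡_f` induced by a partial function
`f : Σ* → M` (encoded via `Option`). -/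
def eqF {A M : Type*} [Monoid M] (f : List A → Option M) (α β : List A) : Prop :=
  (∀ z : List A, (f (α ++ z)).isSome ↔ (f (β ++ z)).isSome) ∧
  ∃ u v : M, ∃ s : List A → M, ∀ z : List A, (f (α ++ z)).isSome →
    f (α ++ z) = some (u * s z) ∧ f (β ++ z) = some (v * s z)

theorem eqF_right_invariant_equivalence {A M : Type*} [Fintype A] [Monoid M]
    (hLC : ∀ a b c : M, c * a = c * b → a = b)
    (hRC : ∀ a b c : M, a * c = b * c → a = b)
    (hRMGE : ∀ a b : M, (∃ m, dvdL a m ∧ dvdL b m) →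
      ∃ s, (dvdL a s ∧ dvdL b s) ∧ ∀ m, dvdL a m → dvdL b m → dvdL s m)
    (f : List A → Option M) :
    Equivalence (eqF f) ∧
    ∀ α β : List A, ∀ a : A, eqF f α β → eqF f (α ++ [a]) (β ++ [a]) := by
  constructor
  · constructor
    · -- reflexivity
      intro α
      refine ⟨fun z => Iff.rfl, 1, 1, fun z => (f (α ++ z)).getD 1, fun z hz => ?_⟩
      obtain ⟨m, hm⟩ := Option.isSome_iff_exists.mp hz
      simp [hm]
    · -- symmetry
      rintro α β ⟨hd, u, v, s, hs⟩
      refine ⟨fun z => (hd z).symm, v, u, s, fun z hz => ?_⟩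
      have hz' := (hd z).mpr hz
      exact ⟨(hs z hz').2, (hs z hz').1⟩
    · -- transitivity
      rintro α β γ ⟨hd1, u, v, s, hs1⟩ ⟨hd2, u', v', s', hs2⟩
      refine ⟨fun z => (hd1 z).trans (hd2 z), ?_⟩
      by_cases hne : ∃ z0, (f (α ++ z0)).isSome
      · obtain ⟨z0, hz0⟩ := hne
        have hz0' := (hd1 z0).mp hz0
        have e0 : u' * s' z0 = v * s z0 :=
          Option.some.inj ((hs2 z0 hz0').1.symm.trans (hs1 z0 hz0).2)
        obtain ⟨w, ⟨⟨p, hp⟩, ⟨q, hq⟩⟩, hmin⟩ :=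
          hRMGE v u' ⟨v * s z0, ⟨s z0, rfl⟩, ⟨s' z0, e0⟩⟩
        have key : ∀ z, ∃ c, (f (α ++ z)).isSome → s z = p * c ∧ s' z = q * c := by
          intro z
          by_cases hz : (f (α ++ z)).isSome
          · have hz' := (hd1 z).mp hz
            have e : u' * s' z = v * s z :=
              Option.some.inj ((hs2 z hz').1.symm.trans (hs1 z hz).2)
            obtain ⟨c, hc⟩ := hmin (v * s z) ⟨s z, rfl⟩ ⟨s' z, e⟩
            refine ⟨c, fun _ => ⟨?_, ?_⟩⟩
            · apply hLC _ _ v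
              rw [← mul_assoc, hp, hc]
            · apply hLC _ _ u'
              rw [← mul_assoc, hq, hc, ← e]
          · exact ⟨1, fun h => absurd h hz⟩
        choose r hr using key
        refine ⟨u * p, v' * q, r, fun z hz => ?_⟩
        have hz' := (hd1 z).mp hz
        constructor
        · rw [(hs1 z hz).1, (hr z hz).1, mul_assoc]
        · rw [(hs2 z hz').2, (hr z hz).2, mul_assoc]
      · exact ⟨1, 1, fun _ => 1, fun z hz => absurd ⟨z, hz⟩ hne⟩
  · -- right invariance
    rintro α β a ⟨hd, u, v, s, hs⟩
    refine ⟨fun z => ?_, u, v, fun z => s ([a] ++ z), fun z hz => ?_⟩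
    · simpa [List.append_assoc] using hd ([a] ++ z)
    · have hz' : (f (α ++ ([a] ++ z))).isSome := by
        simpa [List.append_assoc] using hz
      have := hs ([a] ++ z) hz'
      constructor
      · simpa [List.append_assoc] using this.1
      · simpa [List.append_assoc] using this.2
end

section
/- Every gcd monoid satisfies the WLP-axiom: for all u,v there exists x such that for every sequence (a_n) with u*a_{n+1} = v*a_n for all n, one has u*x ≤_M v*x and x ≤_M a_n for all n. -/
theorem gcd_monoid_WLP {M : Type*} [Monoid M]
    (hLC : ∀ a b c : M, c * a = c * b → a = b)
    (hRC : ∀ a b c : M, a * c = b * c → a = b)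
    (hInf : ∀ S : Set M, S.Nonempty → ∃ l : M,
      (∀ s ∈ S, dvdL l s) ∧ ∀ m, (∀ s ∈ S, dvdL m s) → dvdL m l) :
    ∀ u v : M, ∃ x : M, ∀ a : ℕ → M,
      (∀ n, u * a (n + 1) = v * a n) →
        dvdL (u * x) (v * x) ∧ ∀ n, dvdL x (a n) := by
  intro u v
  by_cases hex : ∃ a : ℕ → M, ∀ n, u * a (n + 1) = v * a n
  · obtain ⟨a₀, ha₀⟩ := hex
    set S : Set M := {m | ∃ a : ℕ → M, (∀ n, u * a (n + 1) = v * a n) ∧ ∃ n, a n = m}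
      with hS
    have hSne : S.Nonempty := ⟨a₀ 0, a₀, ha₀, 0, rfl⟩
    obtain ⟨g, hglb, hgr⟩ := hInf S hSne
    set T : Set M := (fun s => v * s) '' S with hT
    have hTne : T.Nonempty := hSne.image _
    obtain ⟨l, hllb, hlr⟩ := hInf T hTne
    -- u * g is a lower bound of T
    have hug : ∀ t ∈ T, dvdL (u * g) t := by
      rintro t ⟨s, ⟨a, ha, n, rfl⟩, rfl⟩
      have h1 : dvdL g (a (n + 1)) := hglb _ ⟨a, ha, n + 1, rfl⟩
      obtain ⟨c, hc⟩ := h1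
      exact ⟨c, by rw [mul_assoc, hc, ha]⟩
    obtain ⟨p, hp⟩ := hlr _ hug
    -- v is a lower bound of T
    have hv : ∀ t ∈ T, dvdL v t := by
      rintro t ⟨s, _, rfl⟩
      exact ⟨s, rfl⟩
    obtain ⟨c, hc⟩ := hlr _ hv
    -- c is a lower bound of S
    have hcS : ∀ s ∈ S, dvdL c s := by
      intro s hs
      obtain ⟨d, hd⟩ := hllb (v * s) ⟨s, hs, rfl⟩
      refine ⟨d, hLC _ _ v ?_⟩
      rw [← mul_assoc, hc, hd]
    obtain ⟨e, he⟩ := hgr _ hcS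
    have hlvg : dvdL l (v * g) := ⟨e, by rw [← hc, mul_assoc, he]⟩
    obtain ⟨q, hq⟩ := hlvg
    refine ⟨g, fun a ha => ⟨⟨p * q, by rw [← mul_assoc, hp, hq]⟩, fun n => hglb _ ⟨a, ha, n, rfl⟩⟩⟩
  · exact ⟨1, fun a ha => absurd ⟨a, ha⟩ hex⟩
end

section
/- Let M be a commutative cancellative monoid in which every nonempty subset has an infimum w.r.t. divisibility (a gcd monoid). If vA ⊆ uA for a nonempty set A ⊆ M and x₀ is an infimum of A, then u*x₀ divides v*x₀. -/
theorem gcd_monoid_inf_step {M : Type*} [CancelCommMonoid M]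
    (hInf : ∀ S : Set M, S.Nonempty → ∃ l : M,
      (∀ s ∈ S, dvdL l s) ∧ ∀ m, (∀ s ∈ S, dvdL m s) → dvdL m l)
    (u v : M) (A : Set M) (hA : A.Nonempty)
    (hsub : (v * ·) '' A ⊆ (u * ·) '' A)
    (x₀ : M) (hx₀ : (∀ a ∈ A, dvdL x₀ a) ∧ ∀ m, (∀ a ∈ A, dvdL m a) → dvdL m x₀) :
    dvdL (u * x₀) (v * x₀) := by
  obtain ⟨l, hl, hlg⟩ := hInf ((v * ·) '' A) (hA.image _)
  -- u*x₀ is a lower bound of v*A (since v*A ⊆ u*A and x₀ is a lower bound of A)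
  have hlow : dvdL (u * x₀) l := by
    refine hlg _ ?_
    rintro s ⟨a, ha, rfl⟩
    obtain ⟨b, hb, heq⟩ := hsub ⟨a, ha, rfl⟩
    obtain ⟨c, hc⟩ := hx₀.1 b hb
    exact ⟨c, by simp only at heq ⊢; rw [mul_assoc, hc, heq]⟩
  -- v*x₀ is a lower bound of v*A, hence divides l
  have h2 : dvdL (v * x₀) l := by
    refine hlg _ ?_
    rintro s ⟨a, ha, rfl⟩
    obtain ⟨c, hc⟩ := hx₀.1 a ha
    exact ⟨c, by simp only; rw [mul_assoc, hc]⟩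
  obtain ⟨c, hc⟩ := h2
  -- x₀*c is a lower bound of A
  have hxc : ∀ a ∈ A, dvdL (x₀ * c) a := by
    intro a ha
    obtain ⟨d, hd⟩ := hl (v * a) ⟨a, ha, rfl⟩
    refine ⟨d, mul_left_cancel (a := v) ?_⟩
    calc v * (x₀ * c * d) = v * x₀ * c * d := by rw [← mul_assoc, ← mul_assoc]
    _ = l * d := by rw [hc]
    _ = v * a := hd
  obtain ⟨d, hd⟩ := hx₀.2 _ hxc
  obtain ⟨e, he⟩ := hlow
  refine ⟨e * d, ?_⟩
  calc u * x₀ * (e * d) = (u * x₀ * e) * d := by simp [mul_assoc]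
  _ = l * d := by rw [he]
  _ = (v * x₀ * c) * d := by rw [hc]
  _ = v * (x₀ * c * d) := by simp [mul_assoc]
  _ = v * x₀ := by rw [hd]
end
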